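/- Let q ∈ 𝕀 be primitive and admissible, and let q_α = α_q·q be an extension of q. Then there exists a quaternion z ∈ 𝕀 such that tr(q_α·z̄) + tr((z̄)~·(q_α)~) = 1, where ~ denotes the twist map. -/

import Mathlib

noncomputable section

open Quaternion Classical

/-- √5 as a real number. -/
def sqrt5 : ℝ := Real.sqrt 5

/-- The golden ratio τ = (1+√5)/2. -/
def gold : ℝ := (1 + sqrt5) / 2

/-- membership in K = ℚ(√5) ⊆ ℝ. -/
def inK (x : ℝ) : Prop := ∃ a b : ℚ, x = (a : ℝ) + (b : ℝ) * sqrt5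

/-- The nontrivial field automorphism of K = ℚ(√5) (√5 ↦ -√5), extended by the
identity outside K.  Since `1, √5` are linearly independent over ℚ, the rational
coordinates of an element of K are unique, so this is well defined. -/
noncomputable def conjK (x : ℝ) : ℝ :=
  if h : ∃ a b : ℚ, x = (a : ℝ) + (b : ℝ) * sqrt5 then
    (h.choose : ℝ) - (h.choose_spec.choose : ℝ) * sqrt5
  else x

/-- membership in 𝔬 = ℤ[τ], the ring of integers of ℚ(√5). -/
def inO (x : ℝ) : Prop := ∃ m n : ℤ, x = (m : ℝ) + (n : ℝ) * gold

/-- The twist map (a,b,c,d) ↦ (a',b',d',c') on quaternions. -/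
noncomputable def twist (q : ℍ[ℝ]) : ℍ[ℝ] :=
  ⟨conjK q.re, conjK q.imI, conjK q.imK, conjK q.imJ⟩

/-- reduced norm nr(q) = q q̄ (as a real number). -/
def nr (q : ℍ[ℝ]) : ℝ := (q * star q).re

/-- reduced trace tr(q) = q + q̄ (as a real number). -/
def trq (q : ℍ[ℝ]) : ℝ := (q + star q).re

/-- generators of the icosian ring. -/
def e₁ : ℍ[ℝ] := ⟨1, 0, 0, 0⟩
def e₂ : ℍ[ℝ] := ⟨0, 1, 0, 0⟩
def e₃ : ℍ[ℝ] := ⟨1/2, 1/2, 1/2, 1/2⟩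
def e₄ : ℍ[ℝ] := ⟨(1 - gold)/2, gold/2, 0, 1/2⟩

/-- membership in the icosian ring 𝕀, the 𝔬-span of the four generators. -/
def inI (q : ℍ[ℝ]) : Prop :=
  ∃ c₁ c₂ c₃ c₄ : ℝ, inO c₁ ∧ inO c₂ ∧ inO c₃ ∧ inO c₄ ∧
    q = c₁ • e₁ + c₂ • e₂ + c₃ • e₃ + c₄ • e₄

/-- generators of the copy L of the root lattice A₄. -/
def g₁ : ℍ[ℝ] := ⟨1, 0, 0, 0⟩
def g₂ : ℍ[ℝ] := ⟨-1/2, 1/2, 1/2, 1/2⟩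
def g₃ : ℍ[ℝ] := ⟨0, -1, 0, 0⟩
def g₄ : ℍ[ℝ] := ⟨0, 1/2, (gold - 1)/2, -gold/2⟩

/-- L, the ℤ-span of the four generators, as an additive subgroup of ℍ(ℝ). -/
def Lgrp : AddSubgroup ℍ[ℝ] := AddSubgroup.closure {g₁, g₂, g₃, g₄}

/-- `q` is a primitive icosian. -/
def PrimitiveIcosian (q : ℍ[ℝ]) : Prop :=
  inI q ∧ ∀ α : ℝ, inK α → inI (α • q) → inO α

/-- `q` is admissible with |q q̃| = n. -/
def Admissible (q : ℍ[ℝ]) (n : ℕ) : Prop :=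
  nr q * conjK (nr q) = (n : ℝ) ^ 2

/-- The additive map x ↦ r • (q x q̃) on ℍ(ℝ). -/
noncomputable def rotHom (q : ℍ[ℝ]) (r : ℝ) : ℍ[ℝ] →+ ℍ[ℝ] where
  toFun x := r • (q * x * twist q)
  map_zero' := by simp
  map_add' x y := by
    simp [mul_add, add_mul, smul_add]

/-- Commensurateness of two additive subgroups of ℍ(ℝ). -/
def Commensurate (A B : AddSubgroup ℍ[ℝ]) : Prop :=
  (A ⊓ B).relIndex A ≠ 0 ∧ (A ⊓ B).relIndex B ≠ 0

/-- Image of an additive subgroup under a linear isometry of ℍ(ℝ) ≅ ℝ⁴. -/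
def mapIso (R : ℍ[ℝ] ≃ₗᵢ[ℝ] ℍ[ℝ]) (A : AddSubgroup ℍ[ℝ]) : AddSubgroup ℍ[ℝ] :=
  A.map (R.toLinearEquiv.toLinearMap.toAddMonoidHom)

/-- `R` lies in SO(4,ℝ). -/
def IsRotation (R : ℍ[ℝ] ≃ₗᵢ[ℝ] ℍ[ℝ]) : Prop :=
  LinearMap.det (R.toLinearEquiv.toLinearMap) = 1


/-!
Work in `𝔬 = ℤ[τ]`, which is norm-Euclidean, and write `q = ∑ cᵢ eᵢ`, `α ∈ 𝔬`, `ν = nr q ∈ 𝔬`.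
The extension condition `(α² ν) = (ν) ∩ (ν')` says `α² ν ~ lcm(ν, ν')`, i.e. `α² g ~ ν'` with
`g = gcd(ν, ν')`; conjugating gives `α'² g ~ ν`, so `α` and `α'` are coprime. Then no rational prime
divides `√5 α`, which means that `x ↦ tr(α x)` maps `𝔬` onto `ℤ`: pick `x` with `tr(α x) = 1`.
Since `q` is primitive its coordinates generate `𝔬`, and since the trace form `(x, y) ↦ tr(x ȳ)` of
`𝕀` is unimodular, some `z ∈ 𝕀` has `tr(q z̄) = x`. The twist is a Galois-semilinear
anti-automorphism, so `tr(z̄~ q_α~) = tr(q_α z̄)'` and the sum is `tr_{K/ℚ}(α x) = 1`.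
-/

open scoped QuadraticAlgebra

open Matrix

section GCDStar

variable {R : Type*} [CommRing R] [IsDomain R] [GCDMonoid R] [StarRing R]

lemma associated_star_gcd_star (ν : R) :
    Associated (star (gcd ν (star ν))) (gcd ν (star ν)) := by
  have key : ∀ x : R, star (gcd x (star x)) ∣ gcd x (star x) := fun x => by
    refine dvd_gcd ?_ (map_dvd (starRingEnd R) (gcd_dvd_left x (star x)))
    simpa only [starRingEnd_apply, star_star] using
      map_dvd (starRingEnd R) (gcd_dvd_right x (star x))
  refine associated_of_dvd_dvd (key ν) ?_
  simpa only [starRingEnd_apply, star_star] using map_dvd (starRingEnd R) (key ν)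

/-- With `g = gcd(ν, ν*)`, the hypothesis gives `a² ν ~ lcm(ν, ν*)`, hence `g a² ~ ν*` and, after
conjugation, `g a*² ~ ν`; a common factor `d` of `a` and `a*` then satisfies `g d² ∣ g`. -/
lemma isRelPrime_star_of_forall_dvd_iff {a ν : R} (hν : ν ≠ 0)
    (h : ∀ y, a ^ 2 * ν ∣ y ↔ ν ∣ y ∧ star ν ∣ y) : IsRelPrime a (star a) := by
  set g := gcd ν (star ν)
  have hg : g ≠ 0 := fun h0 => hν ((gcd_eq_zero_iff _ _).mp h0).1
  have hlcm : Associated (a ^ 2 * ν) (lcm ν (star ν)) :=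
    associated_of_dvd_dvd ((h _).mpr ⟨dvd_lcm_left _ _, dvd_lcm_right _ _⟩)
      (lcm_dvd_iff.mpr ((h _).mp dvd_rfl))
  have hstar : Associated (g * a ^ 2) (star ν) := by
    refine Associated.of_mul_left ?_ (Associated.refl ν) hν
    have := ((Associated.refl g).mul_mul hlcm).trans (gcd_mul_lcm ν (star ν))
    rwa [mul_comm (a ^ 2), ← mul_assoc, mul_comm g, mul_assoc] at this
  have hself : Associated (g * star a ^ 2) ν := by
    have := hstar.map (starRingEnd R)
    simp only [starRingEnd_apply, star_mul', star_pow, star_star] at this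
    exact ((associated_star_gcd_star ν).symm.mul_right _).trans this
  intro d hda hdb
  have hd : g * d ^ 2 ∣ g * 1 := by
    rw [mul_one]
    exact dvd_gcd ((mul_dvd_mul_left g (pow_dvd_pow_of_dvd hdb 2)).trans hself.dvd)
      ((mul_dvd_mul_left g (pow_dvd_pow_of_dvd hda 2)).trans hstar.dvd)
  exact isUnit_of_dvd_one ((dvd_pow_self d two_ne_zero).trans ((mul_dvd_mul_iff_left hg).mp hd))

end GCDStar

lemma exists_dotProduct_eq_one_of_forall_dvd {R ι : Type*} [CommRing R] [IsPrincipalIdealRing R]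
    [Fintype ι] {c : ι → R} (h : ∀ g, (∀ i, g ∣ c i) → IsUnit g) : ∃ s, s ⬝ᵥ c = 1 := by
  set I := Ideal.span (Set.range c)
  have hI : I = Ideal.span {Submodule.IsPrincipal.generator I} :=
    (Ideal.span_singleton_generator I).symm
  have hunit : IsUnit (Submodule.IsPrincipal.generator I) := h _ fun i =>
    Ideal.mem_span_singleton.mp (hI ▸ Ideal.subset_span (Set.mem_range_self i))
  have h1 : (1 : R) ∈ I := by rw [hI, Ideal.span_singleton_eq_top.mpr hunit]; trivial
  exact Ideal.mem_span_range_iff_exists_fun.mp h1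

/-- The traces `tr (a x)` form the ideal `(m)` of `ℤ` with `m = gcd (tr a) (tr (a ω))`, and
`m ∣ δ a` for `δ = 2ω - b` (with `δ² = b² + 4d`). As `δ* = -δ`, also `m ∣ δ a*`, so coprimality of
`a` and `a*` gives `m ∣ δ`, i.e. `m ∣ 2` and `m ∣ b`. -/
lemma exists_trace_mul_eq_one {d b : ℤ} (hb : Odd b) {a : QuadraticAlgebra ℤ d b}
    (ha : IsCoprime a (star a)) : ∃ x, QuadraticAlgebra.trace (a * x) = 1 := by
  set m : ℤ := (Int.gcd (QuadraticAlgebra.trace a) (QuadraticAlgebra.trace (a * ω)) : ℤ)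
  set δ : QuadraticAlgebra ℤ d b := ⟨-b, 2⟩
  have hδa : δ * a = ⟨QuadraticAlgebra.trace (a * ω) - b * QuadraticAlgebra.trace a,
      QuadraticAlgebra.trace a⟩ := by
    ext <;> simp [δ, QuadraticAlgebra.trace_def] <;> ring
  have hδ_star : star δ = -δ := by ext <;> simp [δ]; ring
  have hdvd : algebraMap ℤ _ m ∣ δ * a := by
    rw [hδa, QuadraticAlgebra.algebraMap_dvd_iff]
    exact ⟨dvd_sub (Int.gcd_dvd_right _ _) (dvd_mul_of_dvd_right (Int.gcd_dvd_left _ _) _),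
      Int.gcd_dvd_left _ _⟩
  have hdvd_star : algebraMap ℤ _ m ∣ δ * star a := by
    have := map_dvd (starRingEnd _) hdvd
    rwa [starRingEnd_apply, starRingEnd_apply, star_mul', hδ_star, neg_mul, dvd_neg,
      QuadraticAlgebra.algebraMap_eq, QuadraticAlgebra.star_mk, mul_zero, add_zero, neg_zero,
      ← QuadraticAlgebra.algebraMap_eq] at this
  obtain ⟨u, v, huv⟩ := ha
  have hδ : algebraMap ℤ _ m ∣ δ := by
    have : δ = u * (δ * a) + v * (δ * star a) := by linear_combination -δ * huv
    rw [this]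
    exact dvd_add (dvd_mul_of_dvd_right hdvd _) (dvd_mul_of_dvd_right hdvd_star _)
  obtain ⟨hmb, hm2⟩ := QuadraticAlgebra.algebraMap_dvd_iff.mp hδ
  have hm1 : m ∣ 1 := by
    obtain ⟨k, hk⟩ := hb
    have := dvd_sub (dvd_neg.mp hmb) (dvd_mul_of_dvd_left hm2 k)
    rwa [show b - δ.im * k = 1 by simp only [δ, hk]; ring] at this
  refine ⟨⟨Int.gcdA (QuadraticAlgebra.trace a) (QuadraticAlgebra.trace (a * ω)),
    Int.gcdB (QuadraticAlgebra.trace a) (QuadraticAlgebra.trace (a * ω))⟩, ?_⟩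
  rw [← Int.eq_one_of_dvd_one (Int.natCast_nonneg _) hm1, Int.gcd_eq_gcd_ab]
  simp only [QuadraticAlgebra.trace_def, QuadraticAlgebra.re_mul, QuadraticAlgebra.im_mul,
    QuadraticAlgebra.omega_re, QuadraticAlgebra.omega_im]
  ring

/-- `⟨a, b, c, d⟩ : ℍ[R]` elaborates at the type `ℍ[R,-1,0,-1]`, on which the simp lemmas about
`Quaternion` do not fire; rewriting it to `quatMk` restores the type `ℍ[R]`. -/
def quatMk {R : Type*} [CommRing R] (a b c d : R) : ℍ[R] := ⟨a, b, c, d⟩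

section QuatMk

variable {R : Type*} [CommRing R] (a b c d : R)

@[simp] lemma mk_eq_quatMk : (⟨a, b, c, d⟩ : ℍ[R]) = quatMk a b c d := rfl
@[simp] lemma quatMk_re : (quatMk a b c d).re = a := rfl
@[simp] lemma quatMk_imI : (quatMk a b c d).imI = b := rfl
@[simp] lemma quatMk_imJ : (quatMk a b c d).imJ = c := rfl
@[simp] lemma quatMk_imK : (quatMk a b c d).imK = d := rfl

end QuatMk

def quaternionMap {R S : Type*} [CommRing R] [CommRing S] (f : R →+* S) : ℍ[R] →+* ℍ[S] where
  toFun x := ⟨f x.re, f x.imI, f x.imJ, f x.imK⟩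
  map_one' := by ext <;> simp
  map_mul' x y := by ext <;> simp
  map_zero' := by ext <;> simp
  map_add' x y := by ext <;> simp

section QuaternionMap

variable {R S : Type*} [CommRing R] [CommRing S] (f : R →+* S)

@[simp] lemma quaternionMap_re (x : ℍ[R]) : (quaternionMap f x).re = f x.re := rfl
@[simp] lemma quaternionMap_imI (x : ℍ[R]) : (quaternionMap f x).imI = f x.imI := rfl
@[simp] lemma quaternionMap_imJ (x : ℍ[R]) : (quaternionMap f x).imJ = f x.imJ := rfl
@[simp] lemma quaternionMap_imK (x : ℍ[R]) : (quaternionMap f x).imK = f x.imK := rfl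

lemma quaternionMap_star (x : ℍ[R]) : quaternionMap f (star x) = star (quaternionMap f x) := by
  ext <;> simp

lemma quaternionMap_smul (r : R) (x : ℍ[R]) :
    quaternionMap f (r • x) = f r • quaternionMap f x := by
  ext <;> simp

end QuaternionMap

lemma Quaternion.re_sum {R ι : Type*} [CommRing R] (s : Finset ι) (f : ι → ℍ[R]) :
    (∑ i ∈ s, f i).re = ∑ i ∈ s, (f i).re :=
  map_sum (QuaternionAlgebra.reₗ (R := R) (-1) 0 (-1)) f s

lemma nr_eq_normSq (q : ℍ[ℝ]) : nr q = Quaternion.normSq q := by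
  rw [nr, Quaternion.self_mul_star, Quaternion.re_coe]

/-- Written `ℍ[GoldenRat]`, the quaternion type would be elaborated with the `Zero`, `One` and `Neg`
instances of `QuadraticAlgebra`, and the instances that Mathlib provides for `ℍ[R]` over a
commutative ring `R` (`StarAddMonoid`, `Algebra`, ...) would then not be found. -/
abbrev QuaternionOver (R : Type) [CommRing R] : Type := ℍ[R]

abbrev GoldenInt := QuadraticAlgebra ℤ 1 1

abbrev GoldenRat := QuadraticAlgebra ℚ 1 1

lemma gold_eq_goldenRatio : gold = Real.goldenRatio := rfl

lemma gold_mul_gold : gold * gold = 1 + gold := by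
  rw [gold_eq_goldenRatio, ← sq, Real.goldenRatio_sq, add_comm]

lemma irrational_sqrt5 : Irrational sqrt5 := by
  simpa [sqrt5] using (by norm_num : Nat.Prime 5).irrational_sqrt

lemma rat_eq_of_add_mul_sqrt5_eq {a b a' b' : ℚ}
    (h : (a : ℝ) + b * sqrt5 = a' + b' * sqrt5) : a = a' ∧ b = b' := by
  obtain hb | hb := eq_or_ne b b'
  · subst hb; exact ⟨by exact_mod_cast add_right_cancel h, rfl⟩
  · refine (irrational_sqrt5 ⟨(a' - a) / (b - b'), ?_⟩).elim
    have : (b : ℝ) - b' ≠ 0 := sub_ne_zero.mpr (by exact_mod_cast hb)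
    push_cast
    field_simp
    linarith

lemma conjK_add_mul_sqrt5 (a b : ℚ) : conjK (a + b * sqrt5) = a - b * sqrt5 := by
  have h : ∃ a' b' : ℚ, (a : ℝ) + b * sqrt5 = a' + b' * sqrt5 := ⟨a, b, rfl⟩
  obtain ⟨ha, hb⟩ := rat_eq_of_add_mul_sqrt5_eq h.choose_spec.choose_spec
  rw [conjK, dif_pos h]
  exact congrArg₂ (fun x y : ℚ => (x : ℝ) - y * sqrt5) ha.symm hb.symm

/-- Makes `GoldenRat` a field, through `QuadraticAlgebra`'s `Field` instance. -/
instance : Fact (∀ r : ℚ, r ^ 2 ≠ 1 + 1 * r) := ⟨fun r h => by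
  have hr : ((r : ℝ) - gold) * (r - (1 - gold)) = 0 := by
    have : (r : ℝ) ^ 2 = 1 + r := by exact_mod_cast (by simpa using h)
    linear_combination this - gold_mul_gold
  rcases mul_eq_zero.mp hr with hr | hr
  · exact Real.goldenRatio_irrational ⟨r, by rw [← gold_eq_goldenRatio]; linarith⟩
  · exact Real.goldenRatio_irrational ⟨1 - r, by rw [← gold_eq_goldenRatio]; push_cast; linarith⟩⟩

namespace GoldenRat

def toReal : GoldenRat →+* ℝ :=
  (QuadraticAlgebra.lift ⟨gold, by simp [gold_mul_gold]⟩ : GoldenRat →ₐ[ℚ] ℝ).toRingHom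

lemma toReal_apply (v : GoldenRat) : toReal v = v.re + v.im * gold := by
  simp [toReal, Rat.smul_def]

lemma toReal_eq_add_mul_sqrt5 (v : GoldenRat) :
    toReal v = ((v.re + v.im / 2 : ℚ) : ℝ) + ((v.im / 2 : ℚ) : ℝ) * sqrt5 := by
  rw [toReal_apply, gold]; push_cast; ring

lemma toReal_injective : Function.Injective toReal := by
  intro v w h
  rw [toReal_eq_add_mul_sqrt5, toReal_eq_add_mul_sqrt5] at h
  obtain ⟨h1, h2⟩ := rat_eq_of_add_mul_sqrt5_eq h
  ext <;> linarith

lemma conjK_toReal (v : GoldenRat) : conjK (toReal v) = toReal (star v) := by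
  rw [toReal_eq_add_mul_sqrt5, conjK_add_mul_sqrt5, toReal_eq_add_mul_sqrt5]
  simp only [QuadraticAlgebra.re_star, QuadraticAlgebra.im_star]
  push_cast
  ring

lemma inK_toReal (v : GoldenRat) : inK (toReal v) := ⟨_, _, toReal_eq_add_mul_sqrt5 v⟩

lemma toReal_add_toReal_star (v : GoldenRat) :
    toReal v + toReal (star v) = QuadraticAlgebra.trace v := by
  simp only [toReal_apply, QuadraticAlgebra.re_star, QuadraticAlgebra.im_star,
    QuadraticAlgebra.trace_def]
  push_cast
  ring

end GoldenRat

namespace GoldenInt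

def toRat : GoldenInt →+* GoldenRat :=
  (QuadraticAlgebra.lift ⟨(ω : GoldenRat), by ext <;> simp⟩ : GoldenInt →ₐ[ℤ] GoldenRat).toRingHom

@[simp] lemma toRat_re (u : GoldenInt) : (toRat u).re = u.re := by simp [toRat]

@[simp] lemma toRat_im (u : GoldenInt) : (toRat u).im = u.im := by simp [toRat]

lemma toRat_star (u : GoldenInt) : toRat (star u) = star (toRat u) := by ext <;> simp

lemma trace_toRat (u : GoldenInt) :
    QuadraticAlgebra.trace (toRat u) = QuadraticAlgebra.trace u := by
  simp [QuadraticAlgebra.trace_def]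

lemma norm_toRat (u : GoldenInt) :
    QuadraticAlgebra.norm (toRat u) = QuadraticAlgebra.norm u := by
  simp [QuadraticAlgebra.norm_def]

def toReal : GoldenInt →+* ℝ := GoldenRat.toReal.comp toRat

lemma toReal_apply (u : GoldenInt) : toReal u = u.re + u.im * gold := by
  simp [toReal, GoldenRat.toReal_apply]

lemma toReal_injective : Function.Injective toReal := by
  intro u v h
  have h' := congrArg (fun w => (w.re, w.im)) (GoldenRat.toReal_injective h)
  simp only [Prod.mk.injEq, toRat_re, toRat_im, Int.cast_inj] at h'
  ext <;> tauto

lemma toRat_injective : Function.Injective toRat := fun _ _ h =>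
  toReal_injective (congrArg GoldenRat.toReal h)

lemma inO_iff {x : ℝ} : inO x ↔ ∃ u, toReal u = x :=
  ⟨fun ⟨m, n, hx⟩ => ⟨⟨m, n⟩, by rw [hx, toReal_apply]⟩,
    fun ⟨u, hu⟩ => ⟨u.re, u.im, by rw [← hu, toReal_apply]⟩⟩

lemma conjK_toReal (u : GoldenInt) : conjK (toReal u) = toReal (star u) := by
  simp [toReal, GoldenRat.conjK_toReal, toRat_star]

instance : IsDomain GoldenInt := toReal_injective.isDomain

lemma norm_ne_zero {u : GoldenInt} (hu : u ≠ 0) : QuadraticAlgebra.norm u ≠ 0 := by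
  intro h
  have : QuadraticAlgebra.norm (toRat u) = 0 := by rw [norm_toRat, h, Int.cast_zero]
  exact hu (toRat_injective (by rw [QuadraticAlgebra.norm_eq_zero_iff_eq_zero.mp this, map_zero]))

lemma abs_sq_add_mul_sub_sq_lt_one {u v : ℚ} (hu : |u| ≤ 1 / 2) (hv : |v| ≤ 1 / 2) :
    |u ^ 2 + u * v - v ^ 2| < 1 := by
  rw [abs_le] at hu hv
  rw [abs_lt]
  constructor <;> nlinarith

/-- The lattice point nearest to `x / y = x * star y / norm y`. -/
def roundQuot (x y : GoldenInt) : GoldenInt :=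
  ⟨round (((x * star y).re : ℚ) / (QuadraticAlgebra.norm y : ℤ)),
    round (((x * star y).im : ℚ) / (QuadraticAlgebra.norm y : ℤ))⟩

lemma natAbs_norm_sub_mul_roundQuot_lt (x : GoldenInt) {y : GoldenInt} (hy : y ≠ 0) :
    (QuadraticAlgebra.norm (x - y * roundQuot x y)).natAbs <
      (QuadraticAlgebra.norm y).natAbs := by
  set N : ℚ := ((QuadraticAlgebra.norm y : ℤ) : ℚ)
  have hN : N ≠ 0 := Int.cast_ne_zero.mpr (norm_ne_zero hy)
  set z := x * star y
  set w := roundQuot x y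
  set u : ℚ := z.re / N - w.re
  set v : ℚ := z.im / N - w.im
  have hu : |u| ≤ 1 / 2 := abs_sub_round _
  have hv : |v| ≤ 1 / 2 := abs_sub_round _
  have hmul : QuadraticAlgebra.norm (x - y * w) * QuadraticAlgebra.norm y =
      QuadraticAlgebra.norm (z - w * algebraMap ℤ GoldenInt (QuadraticAlgebra.norm y)) := by
    rw [QuadraticAlgebra.algebraMap_norm_eq_mul_star, ← QuadraticAlgebra.norm_star y, ← map_mul]
    congr 1
    simp only [z]
    ring
  have key : ((QuadraticAlgebra.norm (x - y * w) : ℤ) : ℚ) = N * (u ^ 2 + u * v - v ^ 2) := by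
    have h := congrArg (fun n : ℤ => (n : ℚ)) hmul
    simp only [QuadraticAlgebra.norm_def (z - _), QuadraticAlgebra.re_sub, QuadraticAlgebra.im_sub,
      QuadraticAlgebra.re_mul, QuadraticAlgebra.im_mul, QuadraticAlgebra.algebraMap_re,
      QuadraticAlgebra.algebraMap_im] at h
    push_cast at h
    have hzre : (z.re : ℚ) = N * (u + w.re) := by
      simp only [u, sub_add_cancel, mul_div_cancel₀ _ hN]
    have hzim : (z.im : ℚ) = N * (v + w.im) := by
      simp only [v, sub_add_cancel, mul_div_cancel₀ _ hN]
    rw [hzre, hzim] at h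
    apply mul_right_cancel₀ hN
    linear_combination h
  have : |((QuadraticAlgebra.norm (x - y * w) : ℤ) : ℚ)| < |N| := by
    rw [key, abs_mul]
    exact mul_lt_of_lt_one_right (abs_pos.mpr hN) (abs_sq_add_mul_sub_sq_lt_one hu hv)
  rw [← Int.cast_abs, ← Int.cast_abs, Int.cast_lt, Int.abs_eq_natAbs, Int.abs_eq_natAbs] at this
  exact_mod_cast this

instance : EuclideanDomain GoldenInt where
  quotient := roundQuot
  quotient_zero x := by simp [roundQuot]; rfl
  remainder x y := x - y * roundQuot x y
  quotient_mul_add_remainder_eq _ _ := add_sub_cancel _ _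
  r x y := (QuadraticAlgebra.norm x).natAbs < (QuadraticAlgebra.norm y).natAbs
  r_wellFounded := (measure fun x : GoldenInt => (QuadraticAlgebra.norm x).natAbs).wf
  remainder_lt x _ hy := natAbs_norm_sub_mul_roundQuot_lt x hy
  mul_left_not_lt x y hy := by
    rw [map_mul, Int.natAbs_mul, not_lt]
    exact Nat.le_mul_of_pos_right _ (Int.natAbs_pos.mpr (norm_ne_zero hy))

instance : GCDMonoid GoldenInt := EuclideanDomain.gcdMonoid GoldenInt

end GoldenInt

lemma half_not_inO : ¬ inO (1 / 2) := by
  rintro ⟨m, n, h⟩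
  have hre := congrArg QuadraticAlgebra.re <| GoldenRat.toReal_injective
    (a₁ := ⟨m, n⟩) (a₂ := ⟨1 / 2, 0⟩) (by simp [GoldenRat.toReal_apply, ← h])
  have : (2 * m : ℚ) = 1 := by simp at hre; linarith
  have : 2 * m = 1 := by exact_mod_cast this
  omega

def multiplesO (r : ℝ) : Set ℝ := {x | ∃ c, inO c ∧ x = r * c}

lemma toReal_mem_multiplesO_iff {u y : GoldenInt} :
    GoldenInt.toReal y ∈ multiplesO (GoldenInt.toReal u) ↔ u ∣ y := by
  constructor
  · rintro ⟨c, hc, h⟩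
    obtain ⟨v, rfl⟩ := GoldenInt.inO_iff.mp hc
    exact ⟨v, GoldenInt.toReal_injective (by rw [h, map_mul])⟩
  · rintro ⟨v, rfl⟩
    exact ⟨_, GoldenInt.inO_iff.mpr ⟨v, rfl⟩, map_mul _ _ _⟩

def twistRat (x : QuaternionOver GoldenRat) : QuaternionOver GoldenRat :=
  ⟨star x.re, star x.imI, star x.imK, star x.imJ⟩

lemma twistRat_mul (x y : QuaternionOver GoldenRat) :
    twistRat (x * y) = twistRat y * twistRat x := by
  ext <;> simp [twistRat, star_mul'] <;> ring

def toQuat : QuaternionOver GoldenRat →+* ℍ[ℝ] := quaternionMap GoldenRat.toReal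

lemma toQuat_smul (r : GoldenRat) (x : QuaternionOver GoldenRat) :
    toQuat (r • x) = GoldenRat.toReal r • toQuat x :=
  quaternionMap_smul _ r x

lemma toQuat_star (x : QuaternionOver GoldenRat) : toQuat (star x) = star (toQuat x) :=
  quaternionMap_star _ x

lemma twist_toQuat (x : QuaternionOver GoldenRat) : twist (toQuat x) = toQuat (twistRat x) := by
  ext <;> simp [twist, twistRat, toQuat, GoldenRat.conjK_toReal]

lemma trq_toQuat (x : QuaternionOver GoldenRat) : trq (toQuat x) = GoldenRat.toReal (2 * x.re) := by
  simp [trq, toQuat, two_mul]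

lemma trq_mul_star_add_trq_twist (x y : QuaternionOver GoldenRat) :
    trq (toQuat x * star (toQuat y)) + trq (twist (star (toQuat y)) * twist (toQuat x)) =
      ((QuadraticAlgebra.trace (2 * (x * star y).re) : ℚ) : ℝ) := by
  rw [← toQuat_star, twist_toQuat, twist_toQuat, ← map_mul, ← map_mul, ← twistRat_mul,
    trq_toQuat, trq_toQuat, ← GoldenRat.toReal_add_toReal_star]
  simp [twistRat, star_mul']

def icosianBasis : Fin 4 → QuaternionOver GoldenRat :=
  ![⟨1, 0, 0, 0⟩, ⟨0, 1, 0, 0⟩, ⟨⟨1/2, 0⟩, ⟨1/2, 0⟩, ⟨1/2, 0⟩, ⟨1/2, 0⟩⟩,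
    ⟨⟨1/2, -1/2⟩, ⟨0, 1/2⟩, 0, ⟨1/2, 0⟩⟩]

def icosian (c : Fin 4 → GoldenInt) : QuaternionOver GoldenRat :=
  ∑ i, GoldenInt.toRat (c i) • icosianBasis i

lemma toQuat_icosianBasis : toQuat ∘ icosianBasis = ![e₁, e₂, e₃, e₄] := by
  funext i
  fin_cases i <;> ext <;>
    simp [icosianBasis, toQuat, e₁, e₂, e₃, e₄, GoldenRat.toReal_apply, gold] <;> ring

lemma toQuat_icosian (c : Fin 4 → GoldenInt) :
    toQuat (icosian c) = GoldenInt.toReal (c 0) • e₁ + GoldenInt.toReal (c 1) • e₂ +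
      GoldenInt.toReal (c 2) • e₃ + GoldenInt.toReal (c 3) • e₄ := by
  have h i : toQuat (icosianBasis i) = ![e₁, e₂, e₃, e₄] i := congrFun toQuat_icosianBasis i
  rw [icosian, map_sum, Fin.sum_univ_four]
  simp only [toQuat_smul, h]
  rfl

lemma inI_iff_exists_icosian {q : ℍ[ℝ]} : inI q ↔ ∃ c, q = toQuat (icosian c) := by
  constructor
  · rintro ⟨c₁, c₂, c₃, c₄, h₁, h₂, h₃, h₄, rfl⟩
    obtain ⟨u₁, rfl⟩ := GoldenInt.inO_iff.mp h₁
    obtain ⟨u₂, rfl⟩ := GoldenInt.inO_iff.mp h₂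
    obtain ⟨u₃, rfl⟩ := GoldenInt.inO_iff.mp h₃
    obtain ⟨u₄, rfl⟩ := GoldenInt.inO_iff.mp h₄
    exact ⟨![u₁, u₂, u₃, u₄], by rw [toQuat_icosian]; rfl⟩
  · rintro ⟨c, rfl⟩
    exact ⟨_, _, _, _, GoldenInt.inO_iff.mpr ⟨c 0, rfl⟩, GoldenInt.inO_iff.mpr ⟨c 1, rfl⟩,
      GoldenInt.inO_iff.mpr ⟨c 2, rfl⟩, GoldenInt.inO_iff.mpr ⟨c 3, rfl⟩, toQuat_icosian c⟩

lemma icosian_mul (g : GoldenInt) (u : Fin 4 → GoldenInt) :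
    icosian (fun i => g * u i) = GoldenInt.toRat g • icosian u := by
  simp only [icosian, map_mul, mul_smul, Finset.smul_sum]

lemma PrimitiveIcosian.ne_zero {q : ℍ[ℝ]} (hq : PrimitiveIcosian q) : q ≠ 0 := by
  rintro rfl
  refine half_not_inO (hq.2 _ ⟨1 / 2, 0, by push_cast; ring⟩ ?_)
  rw [smul_zero]
  exact ⟨0, 0, 0, 0, ⟨0, 0, by simp⟩, ⟨0, 0, by simp⟩, ⟨0, 0, by simp⟩, ⟨0, 0, by simp⟩, by simp⟩

lemma isUnit_of_forall_dvd_of_primitiveIcosian {c : Fin 4 → GoldenInt}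
    (hprim : PrimitiveIcosian (toQuat (icosian c))) {g : GoldenInt} (hg : ∀ i, g ∣ c i) :
    IsUnit g := by
  choose u hu using hg
  have hc : c = fun i => g * u i := funext hu
  have hg0 : g ≠ 0 := by
    rintro rfl
    exact hprim.ne_zero (by rw [hc, icosian_mul, map_zero, zero_smul, map_zero])
  have hg0' : GoldenInt.toRat g ≠ 0 := fun h =>
    hg0 (GoldenInt.toRat_injective (by rw [h, map_zero]))
  obtain ⟨h, hh⟩ := GoldenInt.inO_iff.mp <|
    hprim.2 _ (GoldenRat.inK_toReal (GoldenInt.toRat g)⁻¹) <| by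
      rw [hc, icosian_mul, toQuat_smul, smul_smul, ← map_mul, inv_mul_cancel₀ hg0', map_one,
        one_smul]
      exact inI_iff_exists_icosian.mpr ⟨u, rfl⟩
  refine IsUnit.of_mul_eq_one h (GoldenInt.toReal_injective ?_)
  rw [map_mul, map_one, hh, GoldenInt.toReal, RingHom.comp_apply, ← map_mul,
    mul_inv_cancel₀ hg0', map_one]

/-- `icosianGram = H + Hᵀ` with `H = icosianGramHalf` unitriangular, so that `c ⬝ᵥ H *ᵥ c` is the
reduced norm of `∑ cᵢ eᵢ`. -/
def icosianGramHalf : Matrix (Fin 4) (Fin 4) GoldenInt :=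
  !![1, 0, 1, 1 - ω; 0, 1, 1, ω; 0, 0, 1, 1; 0, 0, 0, 1]

def icosianGram : Matrix (Fin 4) (Fin 4) GoldenInt := icosianGramHalf + icosianGramHalfᵀ

def icosianGramInv : Matrix (Fin 4) (Fin 4) GoldenInt :=
  !![2, -1, -ω, 2 * ω - 1; -1, 2, ω - 1, 1 - 2 * ω; -ω, ω - 1, 2, -2; 2 * ω - 1, 1 - 2 * ω, -2, 4]

lemma icosianGram_mul_icosianGramInv : icosianGram * icosianGramInv = 1 := by
  ext i j : 1
  fin_cases i <;> fin_cases j <;>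
    simp [icosianGram, icosianGramHalf, icosianGramInv, Matrix.mul_apply, Fin.sum_univ_four,
      Matrix.add_apply] <;> ext <;> simp

lemma exists_dotProduct_icosianGram_mulVec_eq {c s : Fin 4 → GoldenInt} (hs : s ⬝ᵥ c = 1)
    (x : GoldenInt) : ∃ d, c ⬝ᵥ icosianGram *ᵥ d = x :=
  ⟨icosianGramInv *ᵥ (x • s), by
    rw [mulVec_mulVec, icosianGram_mul_icosianGramInv, one_mulVec, dotProduct_smul,
      dotProduct_comm, hs, smul_eq_mul, mul_one]⟩

lemma two_mul_re_icosianBasis_mul_star (i j : Fin 4) :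
    2 * (icosianBasis i * star (icosianBasis j)).re = GoldenInt.toRat (icosianGram i j) := by
  fin_cases i <;> fin_cases j <;> ext <;>
    simp [icosianBasis, icosianGram, icosianGramHalf, Matrix.add_apply] <;> norm_num

lemma two_mul_re_icosian_mul_star (c d : Fin 4 → GoldenInt) :
    2 * (icosian c * star (icosian d)).re = GoldenInt.toRat (c ⬝ᵥ icosianGram *ᵥ d) := by
  rw [icosian, icosian, star_sum, Finset.sum_mul_sum, Quaternion.re_sum, Finset.mul_sum]
  simp only [dotProduct, mulVec, Finset.mul_sum, map_sum, map_mul]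
  refine Finset.sum_congr rfl fun i _ => ?_
  rw [Quaternion.re_sum, Finset.mul_sum]
  refine Finset.sum_congr rfl fun j _ => ?_
  rw [Quaternion.star_smul, smul_mul_smul_comm, Quaternion.re_smul, smul_eq_mul,
    ← two_mul_re_icosianBasis_mul_star]
  ring

lemma re_icosian_mul_star_self (c : Fin 4 → GoldenInt) :
    (icosian c * star (icosian c)).re = GoldenInt.toRat (c ⬝ᵥ icosianGramHalf *ᵥ c) := by
  have h := two_mul_re_icosian_mul_star c c
  rw [icosianGram, add_mulVec, dotProduct_add, dotProduct_mulVec c icosianGramHalfᵀ,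
    vecMul_transpose, dotProduct_comm (icosianGramHalf *ᵥ c), ← two_mul, map_mul,
    map_ofNat] at h
  exact mul_left_cancel₀ two_ne_zero h

lemma nr_toQuat_icosian (c : Fin 4 → GoldenInt) :
    nr (toQuat (icosian c)) = GoldenInt.toReal (c ⬝ᵥ icosianGramHalf *ᵥ c) := by
  rw [nr, ← toQuat_star, ← map_mul, toQuat, quaternionMap_re, re_icosian_mul_star_self]
  rfl

lemma trq_add_trq_twist_icosian (a : GoldenInt) (c d : Fin 4 → GoldenInt) :
    trq ((GoldenInt.toReal a • toQuat (icosian c)) * star (toQuat (icosian d))) +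
      trq (twist (star (toQuat (icosian d))) * twist (GoldenInt.toReal a • toQuat (icosian c))) =
      ((QuadraticAlgebra.trace (a * (c ⬝ᵥ icosianGram *ᵥ d)) : ℤ) : ℝ) := by
  have h : GoldenInt.toReal a • toQuat (icosian c) = toQuat (GoldenInt.toRat a • icosian c) := by
    rw [toQuat_smul]; rfl
  rw [h, trq_mul_star_add_trq_twist, smul_mul_assoc, Quaternion.re_smul, smul_eq_mul,
    mul_left_comm, two_mul_re_icosian_mul_star, ← map_mul, GoldenInt.trace_toRat]
  push_cast
  rfl

theorem exists_trace_one_of_extension_general (q : ℍ[ℝ]) (α : ℝ)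
    (hprim : PrimitiveIcosian q)
    (hα : inO α)
    (hext : {x : ℝ | ∃ c : ℝ, inO c ∧ x = α ^ 2 * nr q * c} =
      {x : ℝ | ∃ c : ℝ, inO c ∧ x = nr q * c} ∩
        {x : ℝ | ∃ c : ℝ, inO c ∧ x = conjK (nr q) * c}) :
    ∃ z : ℍ[ℝ], inI z ∧
      trq ((α • q) * star z) + trq (twist (star z) * twist (α • q)) = 1 := by
  obtain ⟨c, rfl⟩ := inI_iff_exists_icosian.mp hprim.1
  obtain ⟨a, rfl⟩ := GoldenInt.inO_iff.mp hα
  set ν := c ⬝ᵥ icosianGramHalf *ᵥ c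
  have hν : nr (toQuat (icosian c)) = GoldenInt.toReal ν := nr_toQuat_icosian c
  have hν0 : ν ≠ 0 := fun h0 => hprim.ne_zero <| by
    rw [← Quaternion.normSq_eq_zero, ← nr_eq_normSq, hν, h0, map_zero]
  rw [hν, GoldenInt.conjK_toReal, ← map_pow, ← map_mul] at hext
  have hdvd (y : GoldenInt) : a ^ 2 * ν ∣ y ↔ ν ∣ y ∧ star ν ∣ y :=
    toReal_mem_multiplesO_iff.symm.trans <| (Set.ext_iff.mp hext _).trans <|
      and_congr toReal_mem_multiplesO_iff toReal_mem_multiplesO_iff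
  obtain ⟨x, hx⟩ := exists_trace_mul_eq_one odd_one <|
    isRelPrime_iff_isCoprime.mp (isRelPrime_star_of_forall_dvd_iff hν0 hdvd)
  obtain ⟨s, hs⟩ := exists_dotProduct_eq_one_of_forall_dvd fun _ =>
    isUnit_of_forall_dvd_of_primitiveIcosian hprim
  obtain ⟨d, hd⟩ := exists_dotProduct_icosianGram_mulVec_eq hs x
  refine ⟨toQuat (icosian d), inI_iff_exists_icosian.mpr ⟨d, rfl⟩, ?_⟩
  rw [trq_add_trq_twist_icosian, hd, hx, Int.cast_one]

theorem exists_trace_one_of_extension (q : ℍ[ℝ]) (n : ℕ) (α : ℝ)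
    (hprim : PrimitiveIcosian q) (hadm : Admissible q n)
    (hα : inO α)
    (hext : {x : ℝ | ∃ c : ℝ, inO c ∧ x = α ^ 2 * nr q * c} =
      {x : ℝ | ∃ c : ℝ, inO c ∧ x = nr q * c} ∩
        {x : ℝ | ∃ c : ℝ, inO c ∧ x = conjK (nr q) * c}) :
    ∃ z : ℍ[ℝ], inI z ∧
      trq ((α • q) * star z) + trq (twist (star z) * twist (α • q)) = 1 :=
  exists_trace_one_of_extension_general q α hprim hα hext

end
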